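/- arXiv:1906.06215 — 3 statements merged into one kernel-verified Lean document; each statement's English description precedes it below -/
import Mathlib

section
/- Let p(t,θ) := 1/(2π) + (1/π)·∑_{k=1}^∞ e^{-k² t}·cos(kθ). Then for every t > 0 and all real numbers x, y, y', one has |p(t, y − x) − p(t, y' − x)| ≤ (1/π)·(1 + 1/(2t))·e^{-t}·|y − y'|. -/
/-! Termwise, `|cos a - cos b| ≤ |a - b|` bounds the difference by
`(1/π) ∑_{k ≥ 1} k e^{-k²t} |y - y'|`. Since `sinh s ≥ s`, we have
`2tk e^{-k²t} ≤ e^{-(k-1)kt} - e^{-k(k+1)t}`, so the terms with `k ≥ 2` telescope to at most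
`e^{-2t}/(2t) ≤ e^{-t}/(2t)`, while the term `k = 1` is `e^{-t}`. -/

open Real

/-- The heat kernel on the unit circle, given by its Fourier series representation
`p(t,θ) = 1/(2π) + (1/π)·∑_{k=1}^∞ e^{-k² t}·cos(kθ)`. -/
noncomputable def circleHeatKernel (t θ : ℝ) : ℝ :=
  1 / (2 * π) + (1 / π) * ∑' k : ℕ, Real.exp (-((k : ℝ) + 1) ^ 2 * t) * Real.cos (((k : ℝ) + 1) * θ)

open Finset

lemma two_mul_mul_exp_le_exp_add_sub_exp_sub (x : ℝ) {s : ℝ} (hs : 0 ≤ s) :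
    2 * s * exp x ≤ exp (x + s) - exp (x - s) := by
  have h : exp (x + s) - exp (x - s) = 2 * exp x * sinh s := by
    rw [sinh_eq, exp_add, exp_sub, exp_neg]
    field_simp
  rw [h, mul_right_comm]
  exact mul_le_mul_of_nonneg_left (self_le_sinh_iff.2 hs) (by positivity)

lemma sum_range_le_of_le_sub_succ {f c : ℕ → ℝ} (hc : ∀ n, 0 ≤ c n)
    (hfc : ∀ n, f n ≤ c n - c (n + 1)) (n : ℕ) : ∑ i ∈ range n, f i ≤ c 0 :=
  calc ∑ i ∈ range n, f i ≤ ∑ i ∈ range n, (c i - c (i + 1)) := sum_le_sum fun i _ ↦ hfc i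
    _ = c 0 - c n := sum_range_sub' c n
    _ ≤ c 0 := sub_le_self _ (hc n)

lemma summable_of_le_sub_succ {f c : ℕ → ℝ} (hf : ∀ n, 0 ≤ f n) (hc : ∀ n, 0 ≤ c n)
    (hfc : ∀ n, f n ≤ c n - c (n + 1)) : Summable f :=
  summable_of_sum_range_le hf (sum_range_le_of_le_sub_succ hc hfc)

lemma tsum_le_of_le_sub_succ {f c : ℕ → ℝ} (hf : ∀ n, 0 ≤ f n) (hc : ∀ n, 0 ≤ c n)
    (hfc : ∀ n, f n ≤ c n - c (n + 1)) : ∑' n, f n ≤ c 0 :=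
  Real.tsum_le_of_sum_range_le hf (sum_range_le_of_le_sub_succ hc hfc)

lemma abs_tsum_mul_cos_sub_le {a : ℕ → ℝ} (ha : Summable fun k : ℕ ↦ ((k : ℝ) + 1) * |a k|)
    (u v : ℝ) :
    |∑' k : ℕ, a k * cos (((k : ℝ) + 1) * u) - ∑' k : ℕ, a k * cos (((k : ℝ) + 1) * v)| ≤
      (∑' k : ℕ, ((k : ℝ) + 1) * |a k|) * |u - v| := by
  have hsum (θ : ℝ) : Summable fun k : ℕ ↦ a k * cos (((k : ℝ) + 1) * θ) := by
    refine ha.of_norm_bounded fun k ↦ ?_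
    rw [Real.norm_eq_abs, abs_mul]
    exact (mul_le_of_le_one_right (abs_nonneg _) (abs_cos_le_one _)).trans
      (le_mul_of_one_le_left (abs_nonneg _) (by simp))
  rw [← (hsum u).tsum_sub (hsum v), ← tsum_mul_right, ← Real.norm_eq_abs]
  refine tsum_of_norm_bounded (ha.mul_right _).hasSum fun k ↦ ?_
  have hk : (0 : ℝ) ≤ (k : ℝ) + 1 := by positivity
  calc ‖a k * cos (((k : ℝ) + 1) * u) - a k * cos (((k : ℝ) + 1) * v)‖
      = |a k| * |cos (((k : ℝ) + 1) * u) - cos (((k : ℝ) + 1) * v)| := by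
        rw [← mul_sub, Real.norm_eq_abs, abs_mul]
    _ ≤ |a k| * |((k : ℝ) + 1) * u - ((k : ℝ) + 1) * v| :=
        mul_le_mul_of_nonneg_left (abs_cos_sub_cos_le _ _) (abs_nonneg _)
    _ = ((k : ℝ) + 1) * |a k| * |u - v| := by
        rw [← mul_sub, abs_mul, abs_of_nonneg hk]; ring

-- The cast `((k + 1 : ℕ) : ℝ)` makes the right side `c k - c (k + 1)` for
-- `c n = e^{-n(n+1)t}/(2t)`, the form the telescoping lemmas expect.
lemma succ_mul_exp_neg_succ_sq_mul_le {t : ℝ} (ht : 0 < t) (k : ℕ) :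
    ((k : ℝ) + 1) * exp (-((k : ℝ) + 1) ^ 2 * t) ≤
      exp (-(k * (k + 1)) * t) / (2 * t) -
        exp (-(((k + 1 : ℕ) : ℝ) * ((k + 1 : ℕ) + 1)) * t) / (2 * t) := by
  have h := two_mul_mul_exp_le_exp_add_sub_exp_sub (-((k : ℝ) + 1) ^ 2 * t)
    (s := ((k : ℝ) + 1) * t) (by positivity)
  rw [← sub_div, le_div_iff₀ (by positivity)]
  have hplus : -((k : ℝ) + 1) ^ 2 * t + ((k : ℝ) + 1) * t = -(k * (k + 1)) * t := by ring
  have hminus : -((k : ℝ) + 1) ^ 2 * t - ((k : ℝ) + 1) * t = -((k + 1) * (k + 1 + 1)) * t := by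
    ring
  rw [hplus, hminus] at h
  push_cast
  linarith

lemma summable_succ_mul_exp_neg_succ_sq_mul {t : ℝ} (ht : 0 < t) :
    Summable fun k : ℕ ↦ ((k : ℝ) + 1) * exp (-((k : ℝ) + 1) ^ 2 * t) :=
  summable_of_le_sub_succ (fun _ ↦ by positivity) (fun _ ↦ by positivity)
    (succ_mul_exp_neg_succ_sq_mul_le ht)

lemma tsum_succ_mul_exp_neg_succ_sq_mul_le {t : ℝ} (ht : 0 < t) :
    ∑' k : ℕ, ((k : ℝ) + 1) * exp (-((k : ℝ) + 1) ^ 2 * t) ≤ (1 + 1 / (2 * t)) * exp (-t) := by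
  have htail := tsum_le_of_le_sub_succ (fun _ ↦ by positivity) (fun _ ↦ by positivity)
    fun k ↦ succ_mul_exp_neg_succ_sq_mul_le ht (k + 1)
  have hhead : exp (-(1 * (1 + 1)) * t) ≤ exp (-t) := exp_le_exp.2 (by linarith)
  rw [(summable_succ_mul_exp_neg_succ_sq_mul ht).tsum_eq_zero_add]
  push_cast at htail ⊢
  calc (0 + 1) * exp (-(0 + 1) ^ 2 * t) + _
      ≤ exp (-t) + exp (-(1 * (1 + 1)) * t) / (2 * t) := by
        rw [zero_add, one_pow, one_mul, neg_one_mul]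
        gcongr
    _ ≤ exp (-t) + exp (-t) / (2 * t) := by gcongr
    _ = (1 + 1 / (2 * t)) * exp (-t) := by ring

/-- Lipschitz estimate for the circle heat kernel: for every `t > 0` and all `x, y, y' ∈ ℝ`,
`|p(t, y − x) − p(t, y' − x)| ≤ (1/π)·(1 + 1/(2t))·e^{-t}·|y − y'|`. -/
theorem circleHeatKernel_lipschitz (t x y y' : ℝ) (ht : 0 < t) :
    |circleHeatKernel t (y - x) - circleHeatKernel t (y' - x)| ≤
      (1 / π) * (1 + 1 / (2 * t)) * Real.exp (-t) * |y - y'| := by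
  have habs (k : ℕ) : |exp (-((k : ℝ) + 1) ^ 2 * t)| = exp (-((k : ℝ) + 1) ^ 2 * t) :=
    abs_of_pos (exp_pos _)
  have hseries := abs_tsum_mul_cos_sub_le (a := fun k : ℕ ↦ exp (-((k : ℝ) + 1) ^ 2 * t))
    (by simpa only [habs] using summable_succ_mul_exp_neg_succ_sq_mul ht) (y - x) (y' - x)
  simp only [habs, sub_sub_sub_cancel_right] at hseries
  calc |circleHeatKernel t (y - x) - circleHeatKernel t (y' - x)|
      = 1 / π * |∑' k : ℕ, exp (-((k : ℝ) + 1) ^ 2 * t) * cos (((k : ℝ) + 1) * (y - x)) -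
          ∑' k : ℕ, exp (-((k : ℝ) + 1) ^ 2 * t) * cos (((k : ℝ) + 1) * (y' - x))| := by
        rw [circleHeatKernel, circleHeatKernel, add_sub_add_left_eq_sub, ← mul_sub, abs_mul,
          abs_of_pos (by positivity)]
    _ ≤ 1 / π * ((1 + 1 / (2 * t)) * exp (-t) * |y - y'|) := by
        gcongr
        exact hseries.trans
          (mul_le_mul_of_nonneg_right (tsum_succ_mul_exp_neg_succ_sq_mul_le ht) (abs_nonneg _))
    _ = 1 / π * (1 + 1 / (2 * t)) * exp (-t) * |y - y'| := by ring
end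

section
/- For every t > 0, L > 0 and all x, y ∈ [0, L], one has ∫_0^L | e^{-(θ-x)²/(4t)} − e^{-(θ-y)²/(4t)} | dθ ≤ 2·|x − y|. -/
open Real

/-- For every `t > 0`, `L > 0` and all `x, y ∈ [0, L]`,
`∫_0^L | e^{-(θ-x)²/(4t)} − e^{-(θ-y)²/(4t)} | dθ ≤ 2·|x − y|`. -/
theorem integral_abs_gaussian_diff_le (t L x y : ℝ) (ht : 0 < t) (hL : 0 < L)
    (hx : x ∈ Set.Icc 0 L) (hy : y ∈ Set.Icc 0 L) :
    (∫ θ in (0 : ℝ)..L,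
        |Real.exp (-(θ - x) ^ 2 / (4 * t)) - Real.exp (-(θ - y) ^ 2 / (4 * t))|) ≤
      2 * |x - y| := by
  wlog hxy : x ≤ y generalizing x y
  · have := this y x hy hx (le_of_not_ge hxy)
    calc (∫ θ in (0:ℝ)..L, |Real.exp (-(θ - x) ^ 2 / (4 * t)) - Real.exp (-(θ - y) ^ 2 / (4 * t))|)
        = ∫ θ in (0:ℝ)..L, |Real.exp (-(θ - y) ^ 2 / (4 * t)) - Real.exp (-(θ - x) ^ 2 / (4 * t))| := by
          congr 1; funext θ; exact abs_sub_comm _ _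
      _ ≤ 2 * |y - x| := this
      _ = 2 * |x - y| := by rw [abs_sub_comm]
  set g : ℝ → ℝ := fun s => Real.exp (-s ^ 2 / (4 * t)) with hg
  have hgc : Continuous g := by fun_prop
  have hgi : ∀ a b : ℝ, IntervalIntegrable g MeasureTheory.volume a b :=
    fun a b => hgc.intervalIntegrable a b
  have hg0 : ∀ s, 0 ≤ g s := fun s => (Real.exp_pos _).le
  have hg1 : ∀ s, g s ≤ 1 := by
    intro s
    rw [show (1:ℝ) = Real.exp 0 by simp]
    apply Real.exp_le_exp.mpr
    apply div_nonpos_of_nonpos_of_nonneg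
    · nlinarith [sq_nonneg s]
    · linarith
  have hint_nonneg : ∀ a b : ℝ, a ≤ b → 0 ≤ ∫ s in a..b, g s := fun a b hab =>
    intervalIntegral.integral_nonneg hab (fun s _ => hg0 s)
  have hint_le : ∀ a b : ℝ, a ≤ b → (∫ s in a..b, g s) ≤ b - a := by
    intro a b hab
    calc (∫ s in a..b, g s) ≤ ∫ _s in a..b, (1:ℝ) :=
        intervalIntegral.integral_mono_on hab (hgi a b) intervalIntegrable_const
          (fun s _ => hg1 s)
      _ = b - a := by simp
  -- key translation estimate
  have key : ∀ a b c : ℝ, (∫ s in (a+c)..(b+c), g s) - (∫ s in a..b, g s) ≤ |c| := by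
    intro a b c
    have h1 : (∫ s in (a+c)..b, g s) + (∫ s in b..(b+c), g s) = ∫ s in (a+c)..(b+c), g s :=
      intervalIntegral.integral_add_adjacent_intervals (hgi _ _) (hgi _ _)
    have h2 : (∫ s in a..(a+c), g s) + (∫ s in (a+c)..b, g s) = ∫ s in a..b, g s :=
      intervalIntegral.integral_add_adjacent_intervals (hgi _ _) (hgi _ _)
    rcases le_or_gt 0 c with hc | hc
    · have hb : (∫ s in b..(b+c), g s) ≤ c := by
        have := hint_le b (b+c) (by linarith); linarith
      have ha : 0 ≤ ∫ s in a..(a+c), g s := hint_nonneg a (a+c) (by linarith)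
      rw [abs_of_nonneg hc]; linarith
    · have hb : (∫ s in b..(b+c), g s) ≤ 0 := by
        rw [intervalIntegral.integral_symm]
        have := hint_nonneg (b+c) b (by linarith); linarith
      have ha : c ≤ ∫ s in a..(a+c), g s := by
        rw [intervalIntegral.integral_symm]
        have := hint_le (a+c) a (by linarith); linarith
      rw [abs_of_neg hc]; linarith
  obtain ⟨hx0, hxL⟩ := hx
  obtain ⟨hy0, hyL⟩ := hy
  set m := (x + y) / 2 with hm
  have hm0 : 0 ≤ m := by positivity
  have hmL : m ≤ L := by simp only [hm]; linarith
  have hFc : Continuous (fun θ => |g (θ - x) - g (θ - y)|) := by fun_prop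
  have hFi : ∀ a b : ℝ, IntervalIntegrable (fun θ => |g (θ - x) - g (θ - y)|)
      MeasureTheory.volume a b := fun a b => hFc.intervalIntegrable a b
  have hgeq : ∀ θ : ℝ, |Real.exp (-(θ - x) ^ 2 / (4 * t)) - Real.exp (-(θ - y) ^ 2 / (4 * t))|
      = |g (θ - x) - g (θ - y)| := fun θ => rfl
  -- split the integral at m
  have hsplit : (∫ θ in (0:ℝ)..L, |g (θ - x) - g (θ - y)|)
      = (∫ θ in (0:ℝ)..m, |g (θ - x) - g (θ - y)|)
        + ∫ θ in m..L, |g (θ - x) - g (θ - y)| :=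
    (intervalIntegral.integral_add_adjacent_intervals (hFi _ _) (hFi _ _)).symm
  -- first piece
  have hp1 : (∫ θ in (0:ℝ)..m, |g (θ - x) - g (θ - y)|) ≤ y - x := by
    have heq : (∫ θ in (0:ℝ)..m, |g (θ - x) - g (θ - y)|)
        = ∫ θ in (0:ℝ)..m, (g (θ - x) - g (θ - y)) := by
      apply intervalIntegral.integral_congr
      intro θ hθ
      rw [Set.uIcc_of_le hm0] at hθ
      have hθm : θ ≤ m := hθ.2
      have : g (θ - y) ≤ g (θ - x) := by
        apply Real.exp_le_exp.mpr
        apply div_le_div_of_nonneg_right ?_ (by linarith)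
        nlinarith
      exact abs_of_nonneg (by linarith)
    have i1 : IntervalIntegrable (fun θ : ℝ => g (θ - x)) MeasureTheory.volume 0 m :=
      Continuous.intervalIntegrable (by fun_prop) _ _
    have i2 : IntervalIntegrable (fun θ : ℝ => g (θ - y)) MeasureTheory.volume 0 m :=
      Continuous.intervalIntegrable (by fun_prop) _ _
    rw [heq, intervalIntegral.integral_sub i1 i2]
    have e1 : (∫ θ in (0:ℝ)..m, g (θ - x)) = ∫ s in (0 - x)..(m - x), g s :=
      intervalIntegral.integral_comp_sub_right g x
    have e2 : (∫ θ in (0:ℝ)..m, g (θ - y)) = ∫ s in (0 - y)..(m - y), g s :=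
      intervalIntegral.integral_comp_sub_right g y
    rw [e1, e2]
    have := key (0 - y) (m - y) (y - x)
    have ha : (0 - y) + (y - x) = 0 - x := by ring
    have hb : (m - y) + (y - x) = m - x := by ring
    rw [ha, hb, abs_of_nonneg (by linarith)] at this
    linarith
  -- second piece
  have hp2 : (∫ θ in m..L, |g (θ - x) - g (θ - y)|) ≤ y - x := by
    have heq : (∫ θ in m..L, |g (θ - x) - g (θ - y)|)
        = ∫ θ in m..L, (g (θ - y) - g (θ - x)) := by
      apply intervalIntegral.integral_congr
      intro θ hθ
      rw [Set.uIcc_of_le hmL] at hθ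
      have hθm : m ≤ θ := hθ.1
      have : g (θ - x) ≤ g (θ - y) := by
        apply Real.exp_le_exp.mpr
        apply div_le_div_of_nonneg_right ?_ (by linarith)
        nlinarith
      dsimp only
      rw [abs_sub_comm]
      exact abs_of_nonneg (by linarith)
    have i1 : IntervalIntegrable (fun θ : ℝ => g (θ - y)) MeasureTheory.volume m L :=
      Continuous.intervalIntegrable (by fun_prop) _ _
    have i2 : IntervalIntegrable (fun θ : ℝ => g (θ - x)) MeasureTheory.volume m L :=
      Continuous.intervalIntegrable (by fun_prop) _ _
    rw [heq, intervalIntegral.integral_sub i1 i2]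
    have e1 : (∫ θ in m..L, g (θ - x)) = ∫ s in (m - x)..(L - x), g s :=
      intervalIntegral.integral_comp_sub_right g x
    have e2 : (∫ θ in m..L, g (θ - y)) = ∫ s in (m - y)..(L - y), g s :=
      intervalIntegral.integral_comp_sub_right g y
    rw [e1, e2]
    have := key (m - x) (L - x) (x - y)
    have ha : (m - x) + (x - y) = m - y := by ring
    have hb : (L - x) + (x - y) = L - y := by ring
    rw [ha, hb, abs_of_nonpos (by linarith)] at this
    linarith
  calc (∫ θ in (0:ℝ)..L, |Real.exp (-(θ - x) ^ 2 / (4 * t)) - Real.exp (-(θ - y) ^ 2 / (4 * t))|)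
      = ∫ θ in (0:ℝ)..L, |g (θ - x) - g (θ - y)| := by simp only [hgeq]
    _ = _ := hsplit
    _ ≤ (y - x) + (y - x) := add_le_add hp1 hp2
    _ = 2 * |x - y| := by rw [abs_of_nonpos (by linarith)]; ring
end

section
/- For every t > 0, L > 0 and all x, y ∈ [0, L], one has ∫_0^L ∑_{k∈ℤ} | e^{-(θ - x - 2kL)²/(4t)} − e^{-(θ - y - 2kL)²/(4t)} | dθ ≤ 4·|x − y|. -/
/-!
Let `g u = exp (-u ^ 2 / (4 * t))` and `G u = |g (u - x) - g (u - y)|`. The integrand is the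
periodization `∑ k, G (θ - 2 k L)`; since the translates of `(0, L]` by `2 k L` are pairwise
disjoint, its integral over `(0, L]` is at most `∫ G`. As `g` decreases in `|u|`, the difference
`g (u - x) - g (u - y)` has constant sign on each side of the midpoint `m` of `x` and `y`, so the
integral of `G` over either side of `m` is the mass of `g` on an interval of length `|x - y|`, at
most `g 0 * |x - y| = |x - y|`. This gives the bound `2 * |x - y|`.
-/

open Real MeasureTheory Set
open scoped ENNReal Function

theorem integral_Iic_comp_sub_right {E : Type*} [NormedAddCommGroup E] [NormedSpace ℝ E]
    (f : ℝ → E) (a b : ℝ) : ∫ u in Iic b, f (u - a) = ∫ u in Iic (b - a), f u := by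
  conv_lhs => rw [← sub_add_cancel b a, ← preimage_sub_const_Iic]
  exact (measurePreserving_sub_right volume a).setIntegral_preimage_emb
    (measurableEmbedding_subRight a) f _

theorem integral_Ioi_comp_sub_right {E : Type*} [NormedAddCommGroup E] [NormedSpace ℝ E]
    (f : ℝ → E) (a b : ℝ) : ∫ u in Ioi b, f (u - a) = ∫ u in Ioi (b - a), f u := by
  conv_lhs => rw [← sub_add_cancel b a, ← preimage_sub_const_Ioi]
  exact (measurePreserving_sub_right volume a).setIntegral_preimage_emb
    (measurableEmbedding_subRight a) f _

theorem integral_abs_sub_comp_sub_le {f : ℝ → ℝ} (hf : Integrable f)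
    (hmono : ∀ v w, |v| ≤ |w| → f w ≤ f v) (x y : ℝ) :
    ∫ u, |f (u - x) - f (u - y)| ≤ 2 * f 0 * |x - y| := by
  wlog hxy : x ≤ y generalizing x y
  · simpa only [abs_sub_comm] using this y x (le_of_not_ge hxy)
  set m := (x + y) / 2 with hm
  have hx : Integrable fun u => f (u - x) := hf.comp_sub_right x
  have hy : Integrable fun u => f (u - y) := hf.comp_sub_right y
  have hstrip : ∫ v in (m - y)..(m - x), f v ≤ f 0 * |x - y| := by
    rw [abs_sub_comm, abs_of_nonneg (sub_nonneg.mpr hxy)]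
    calc ∫ v in (m - y)..(m - x), f v ≤ ∫ _ in (m - y)..(m - x), f 0 :=
          intervalIntegral.integral_mono_on (by linarith) hf.intervalIntegrable
            intervalIntegrable_const fun v _ => hmono 0 v (by simp)
      _ = f 0 * (y - x) := by
          rw [intervalIntegral.integral_const, smul_eq_mul]
          ring
  have hcloser_x : ∀ u ≤ m, |u - x| ≤ |u - y| := fun u hu =>
    sq_le_sq.mp (by nlinarith [mul_nonneg (sub_nonneg.mpr hxy) (sub_nonneg.mpr hu)])
  have hcloser_y : ∀ u, m < u → |u - y| ≤ |u - x| := fun u hu =>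
    sq_le_sq.mp (by nlinarith [mul_nonneg (sub_nonneg.mpr hxy) (sub_nonneg.mpr hu.le)])
  have hleft : ∫ u in Iic m, |f (u - x) - f (u - y)| = ∫ v in (m - y)..(m - x), f v := by
    rw [setIntegral_congr_fun measurableSet_Iic fun u hu =>
        abs_of_nonneg (sub_nonneg.mpr (hmono _ _ (hcloser_x u hu))),
      integral_sub hx.integrableOn hy.integrableOn, integral_Iic_comp_sub_right,
      integral_Iic_comp_sub_right, intervalIntegral.integral_Iic_sub_Iic hf.integrableOn
        hf.integrableOn]
  have hright : ∫ u in Ioi m, |f (u - x) - f (u - y)| = ∫ v in (m - y)..(m - x), f v := by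
    rw [setIntegral_congr_fun measurableSet_Ioi fun u hu =>
        abs_of_nonpos (sub_nonpos.mpr (hmono _ _ (hcloser_y u hu))),
      integral_neg, integral_sub hx.integrableOn hy.integrableOn, integral_Ioi_comp_sub_right,
      integral_Ioi_comp_sub_right, neg_sub, intervalIntegral.integral_Ioi_sub_Ioi'
        hf.integrableOn hf.integrableOn]
  have habs : Integrable fun u => |f (u - x) - f (u - y)| := (hx.sub hy).abs
  rw [← intervalIntegral.integral_Iic_add_Ioi habs.integrableOn habs.integrableOn, hleft, hright]
  linarith

theorem pairwise_disjoint_Ioc_sub_intCast_mul {L p : ℝ} (hL : 0 ≤ L) (hLp : L ≤ p) :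
    Pairwise (Disjoint on fun k : ℤ => Ioc (-(k * p)) (L - k * p)) := by
  refine (pairwise_disjoint_on _).mpr fun j k hjk => ?_
  have hjk' : (j : ℝ) + 1 ≤ k := by exact_mod_cast hjk
  rw [Ioc_disjoint_Ioc]
  exact (min_le_right _ _).trans (le_trans (by nlinarith) (le_max_left _ _))

theorem lintegral_Ioc_tsum_comp_sub_intCast_mul_le {q : ℝ → ℝ≥0∞} (hq : AEMeasurable q)
    {L p : ℝ} (hL : 0 ≤ L) (hLp : L ≤ p) :
    ∫⁻ θ in Ioc 0 L, ∑' k : ℤ, q (θ - k * p) ≤ ∫⁻ u, q u :=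
  calc ∫⁻ θ in Ioc 0 L, ∑' k : ℤ, q (θ - k * p)
      = ∑' k : ℤ, ∫⁻ θ in Ioc 0 L, q (θ - k * p) := lintegral_tsum fun k =>
        (hq.comp_quasiMeasurePreserving
          (measurePreserving_sub_right volume _).quasiMeasurePreserving).restrict
    _ = ∑' k : ℤ, ∫⁻ u in Ioc (-(k * p)) (L - k * p), q u := by
        refine tsum_congr fun k => ?_
        rw [(measurePreserving_sub_right volume _).setLIntegral_comp_emb
          (measurableEmbedding_subRight _), image_sub_const_Ioc, zero_sub]
    _ = ∫⁻ u in ⋃ k : ℤ, Ioc (-(k * p)) (L - k * p), q u :=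
        (lintegral_iUnion (fun _ => measurableSet_Ioc)
          (pairwise_disjoint_Ioc_sub_intCast_mul hL hLp) q).symm
    _ ≤ ∫⁻ u, q u := setLIntegral_le_lintegral _ _

theorem ENNReal.ofReal_tsum_le_of_nonneg {ι : Type*} {f : ι → ℝ} (hf : ∀ i, 0 ≤ f i) :
    ENNReal.ofReal (∑' i, f i) ≤ ∑' i, ENNReal.ofReal (f i) := by
  by_cases hs : Summable f
  · exact (ENNReal.ofReal_tsum_of_nonneg hf hs).le
  · simp [tsum_eq_zero_of_not_summable hs]

theorem intervalIntegral_tsum_comp_sub_intCast_mul_le {g : ℝ → ℝ} (hg0 : ∀ u, 0 ≤ g u)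
    (hg : Integrable g) {L p : ℝ} (hL : 0 ≤ L) (hLp : L ≤ p) :
    ∫ θ in 0..L, ∑' k : ℤ, g (θ - k * p) ≤ ∫ u, g u := by
  rw [intervalIntegral.integral_of_le hL]
  by_cases hint : IntegrableOn (fun θ => ∑' k : ℤ, g (θ - k * p)) (Ioc 0 L)
  · rw [integral_eq_lintegral_of_nonneg_ae (ae_of_all _ fun θ => tsum_nonneg fun k => hg0 _)
      hint.aestronglyMeasurable]
    refine ENNReal.toReal_le_of_le_ofReal (integral_nonneg hg0) ?_
    rw [ofReal_integral_eq_lintegral_ofReal hg (ae_of_all _ hg0)]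
    exact (lintegral_mono fun θ => ENNReal.ofReal_tsum_le_of_nonneg fun k => hg0 _).trans
      (lintegral_Ioc_tsum_comp_sub_intCast_mul_le hg.aemeasurable.ennreal_ofReal hL hLp)
  · rw [integral_undef hint]
    exact integral_nonneg hg0

theorem integrable_exp_neg_sq_div {s : ℝ} (hs : 0 < s) :
    Integrable fun u : ℝ => exp (-u ^ 2 / s) := by
  simpa only [div_eq_inv_mul, mul_neg, neg_mul] using integrable_exp_neg_mul_sq (inv_pos.mpr hs)

theorem exp_neg_sq_div_le_of_abs_le {s v w : ℝ} (hs : 0 ≤ s) (h : |v| ≤ |w|) :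
    exp (-w ^ 2 / s) ≤ exp (-v ^ 2 / s) :=
  exp_le_exp.mpr (div_le_div_of_nonneg_right (neg_le_neg (sq_le_sq.mpr h)) hs)

theorem integral_tsum_abs_periodized_gaussian_diff_le_general (t L x y : ℝ) (ht : 0 < t) (hL : 0 < L) :
    (∫ θ in (0 : ℝ)..L,
        ∑' k : ℤ, |Real.exp (-(θ - x - 2 * (k : ℝ) * L) ^ 2 / (4 * t)) -
          Real.exp (-(θ - y - 2 * (k : ℝ) * L) ^ 2 / (4 * t))|) ≤
      4 * |x - y| := by
  set f : ℝ → ℝ := fun u => exp (-u ^ 2 / (4 * t))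
  have hf : Integrable f := integrable_exp_neg_sq_div (by positivity)
  have hshift : ∫ u, |f (u - x) - f (u - y)| ≤ 2 * |x - y| := by
    simpa [f] using integral_abs_sub_comp_sub_le hf
      (fun v w => exp_neg_sq_div_le_of_abs_le (by positivity)) x y
  have hperiod : ∀ (θ : ℝ) (k : ℤ), θ - 2 * (k : ℝ) * L = θ - k * (2 * L) := fun _ _ => by ring
  calc _ = ∫ θ in (0 : ℝ)..L, ∑' k : ℤ,
        |f (θ - k * (2 * L) - x) - f (θ - k * (2 * L) - y)| := by
        simp only [f, sub_right_comm _ x, sub_right_comm _ y, hperiod]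
    _ ≤ ∫ u, |f (u - x) - f (u - y)| :=
        intervalIntegral_tsum_comp_sub_intCast_mul_le (fun _ => abs_nonneg _)
          ((hf.comp_sub_right x).sub (hf.comp_sub_right y)).abs hL.le (by linarith)
    _ ≤ 4 * |x - y| := by linarith [abs_nonneg (x - y)]

/-- For every `t > 0`, `L > 0` and all `x, y ∈ [0, L]`,
`∫_0^L ∑_{k∈ℤ} | e^{-(θ - x - 2kL)²/(4t)} − e^{-(θ - y - 2kL)²/(4t)} | dθ ≤ 4·|x − y|`. -/
theorem integral_tsum_abs_periodized_gaussian_diff_le (t L x y : ℝ) (ht : 0 < t) (hL : 0 < L)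
    (hx : x ∈ Set.Icc 0 L) (hy : y ∈ Set.Icc 0 L) :
    (∫ θ in (0 : ℝ)..L,
        ∑' k : ℤ, |Real.exp (-(θ - x - 2 * (k : ℝ) * L) ^ 2 / (4 * t)) -
          Real.exp (-(θ - y - 2 * (k : ℝ) * L) ^ 2 / (4 * t))|) ≤
      4 * |x - y| :=
  integral_tsum_abs_periodized_gaussian_diff_le_general t L x y ht hL
end
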